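/- Let a, b be integers with 3 ≤ a ≤ b, and set t = (a−1)(b−1) + 1 and m = (a−1)(b−1). Then C(t−a+3, 3) + C(t−b+3, 3) − C(t−a−b+3, 3) − C(m+2, 3) ≤ 0, where C(x, 3) denotes the binomial coefficient, taken to be 0 when x < 3. Equivalently, for a general complete intersection curve C of type (a,b) in P^3, vdim(C,t,m) ≤ 0. -/
import Mathlib

lemma choose_three_cast (m : ℕ) :
    (((m+2).choose 3 : ℤ)) * 6 = ((m:ℤ)+2)*((m:ℤ)+1)*(m:ℤ) := by
  have h : (m+2).descFactorial 3 = 6 * (m+2).choose 3 := by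
    rw [Nat.descFactorial_eq_factorial_mul_choose]
    norm_num [Nat.factorial]
  have h2 : (m+2).descFactorial 3 = (m+2)*(m+1)*m := by
    simp [Nat.descFactorial]; ring
  have h3 : 6 * (m+2).choose 3 = (m+2)*(m+1)*m := by omega
  have h4 := congrArg (Nat.cast (R := ℤ)) h3
  push_cast at h4
  linear_combination h4

set_option maxHeartbeats 2000000 in
/-- the computation in Proposition 6.4: for `3 ≤ a ≤ b`,
`t = (a-1)(b-1)+1` and `m = (a-1)(b-1)`, one has
`C(t-a+3,3) + C(t-b+3,3) - C(t-a-b+3,3) - C(m+2,3) ≤ 0`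
(where `C(x,3) = 0` for `x < 3`; note the truncated ℕ-subtractions below realize
exactly this convention); equivalently, `vdim(C,t,m) ≤ 0` for a general complete
intersection curve `C` of type `(a,b)` in `ℙ^3`. -/
theorem statement_12 (a b : ℕ) (ha : 3 ≤ a) (hab : a ≤ b) :
    ((((a-1)*(b-1)+1) - a + 3).choose 3 : ℤ) + ((((a-1)*(b-1)+1) - b + 3).choose 3 : ℤ)
      - ((((a-1)*(b-1)+1) + 3 - (a+b)).choose 3 : ℤ)
      - (((a-1)*(b-1) + 2).choose 3 : ℤ) ≤ 0 := by
  obtain ⟨c, rfl⟩ : ∃ c, a = c + 3 := ⟨a - 3, by omega⟩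
  obtain ⟨d, rfl⟩ : ∃ d, b = c + 3 + d := ⟨b - (c+3), by omega⟩
  have hq : (c+3-1)*(c+3+d-1) = c*c + c*d + 4*c + 2*d + 4 := by
    have h1 : c+3-1 = c+2 := by omega
    have h2 : c+3+d-1 = c+d+2 := by omega
    rw [h1, h2]; ring
  have e1 : ((c+3-1)*(c+3+d-1)+1) - (c+3) + 3 = (c*c+c*d+3*c+2*d+3) + 2 := by
    rw [hq]; omega
  have e2 : ((c+3-1)*(c+3+d-1)+1) - (c+3+d) + 3 = (c*c+c*d+3*c+d+3) + 2 := by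
    rw [hq]; omega
  have e3 : ((c+3-1)*(c+3+d-1)+1) + 3 - ((c+3)+(c+3+d)) = (c*c+c*d+2*c+d) + 2 := by
    rw [hq]; omega
  have e4 : (c+3-1)*(c+3+d-1) + 2 = (c*c+c*d+4*c+2*d+4) + 2 := by
    rw [hq]
  rw [e1, e2, e3, e4]
  have h1 := choose_three_cast (c*c+c*d+3*c+2*d+3)
  have h2 := choose_three_cast (c*c+c*d+3*c+d+3)
  have h3 := choose_three_cast (c*c+c*d+2*c+d)
  have h4 := choose_three_cast (c*c+c*d+4*c+2*d+4)
  push_cast at h1 h2 h3 h4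
  set x1 : ℤ := (((c*c+c*d+3*c+2*d+3) + 2).choose 3 : ℤ) with hx1
  set x2 : ℤ := (((c*c+c*d+3*c+d+3) + 2).choose 3 : ℤ) with hx2
  set x3 : ℤ := (((c*c+c*d+2*c+d) + 2).choose 3 : ℤ) with hx3
  set x4 : ℤ := (((c*c+c*d+4*c+2*d+4) + 2).choose 3 : ℤ) with hx4
  have key : (x1 + x2 - x3 - x4) * 6
      = -(6*(c:ℤ)^3 + 9*(c:ℤ)^2*(d:ℤ) + 18*(c:ℤ)^2 + 3*(c:ℤ)*(d:ℤ)^2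
          + 18*(c:ℤ)*(d:ℤ) + 18*(c:ℤ) + 3*(d:ℤ)^2 + 9*(d:ℤ)) := by
    linear_combination h1 + h2 - h3 - h4
  have hpos : (0:ℤ) ≤ 6*(c:ℤ)^3 + 9*(c:ℤ)^2*(d:ℤ) + 18*(c:ℤ)^2 + 3*(c:ℤ)*(d:ℤ)^2
      + 18*(c:ℤ)*(d:ℤ) + 18*(c:ℤ) + 3*(d:ℤ)^2 + 9*(d:ℤ) := by positivity
  linarith [key, hpos]
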